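/- For every nonnegative integer n, ∑_{k=0}^{n} (-1)^k * k!/(k+1) * S(n,k) = ∑_{i=0}^{n} (-1)^i * C(n+1,i+1)/C(n+i,i) * S(n+i,i), i.e., the two explicit Stirling-number formulas for B_n agree (with S(0,0)=1 and S(n,0)=0 for n≥1). -/

import Mathlib

/-- Stirling numbers of the second kind (so S(0,0)=1 and S(n,0)=0 for n>=1). -/
def stirling2 : ℕ → ℕ → ℕ
  | 0, 0 => 1
  | 0, _ + 1 => 0
  | _ + 1, 0 => 0
  | n + 1, k + 1 => (k + 1) * stirling2 n (k + 1) + stirling2 n k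

/-!
Write `E = exp X - 1` and `F = E / X`. The powers of `E` are the exponential generating functions
`E ^ k = k! ∑ₘ S(m, k) Xᵐ / m!`, and the Bernoulli series `B = X / E` is the inverse of `F`.
So if `G * F ≡ 1 mod X ^ (n + 1)`, the `n`-th coefficients of `G` and `B` agree, and both sums
are `n!` times such a coefficient:
* for the first, `G = ∑_{k ≤ n} (-1)ᵏ Eᵏ / (k + 1)`, a truncation of `log (1 + E) / E`; indeed
  `(G * E)' = ∑_{k ≤ n} (-E)ᵏ exp X = 1 - (-E) ^ (n + 1)`, so `G * E ≡ X mod X ^ (n + 2)`;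
* for the second, `G = ∑_{i ≤ n} (-1)ⁱ C(n+1, i+1) Fⁱ = (1 - (1 - F) ^ (n + 1)) / F`, and
  `X ∣ 1 - F`.
-/

open Finset PowerSeries Nat

theorem stirling2_eq_stirlingSecond : ∀ n k, stirling2 n k = stirlingSecond n k
  | 0, 0 | 0, _ + 1 | _ + 1, 0 => rfl
  | n + 1, k + 1 => by
    rw [stirling2, stirlingSecond_succ_succ, stirling2_eq_stirlingSecond n (k + 1),
      stirling2_eq_stirlingSecond n k]

theorem one_sub_pow_succ {R : Type*} [CommRing R] (x : R) (n : ℕ) :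
    (1 - x) ^ (n + 1)
      = 1 - ∑ i ∈ range (n + 1), (-1) ^ i * (n + 1).choose (i + 1) * x ^ (i + 1) := by
  have hterm : ∀ i ∈ range (n + 1), (-x) ^ (i + 1) * 1 ^ (n + 1 - (i + 1)) * (n + 1).choose (i + 1)
      = -((-1) ^ i * (n + 1).choose (i + 1) * x ^ (i + 1)) := fun i _ => by
    rw [one_pow, mul_one, neg_pow, pow_succ]; ring
  rw [sub_eq_neg_add, add_pow, sum_range_succ', sum_congr rfl hterm, sum_neg_distrib]
  simp only [pow_zero, one_pow, Nat.choose_zero_right, Nat.cast_one, mul_one]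
  ring

namespace PowerSeries

variable {R : Type*} [CommRing R]

theorem coeff_eq_of_X_pow_dvd_mul_sub_one {f g h : R⟦X⟧} {n : ℕ} (hg : g * f = 1)
    (hh : X ^ (n + 1) ∣ h * f - 1) : coeff n h = coeff n g := by
  have hdiff : h - g = (h * f - 1) * g := by linear_combination (-h) * hg
  rw [← sub_eq_zero, ← map_sub, hdiff]
  exact X_pow_dvd_iff.1 (hh.mul_right g) n (lt_add_one n)

theorem X_pow_succ_dvd_of_X_pow_dvd_derivative [IsAddTorsionFree R] {f : R⟦X⟧} {m : ℕ}
    (h0 : constantCoeff f = 0) (hd : X ^ m ∣ d⁄dX R f) : X ^ (m + 1) ∣ f := by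
  rw [X_pow_dvd_iff] at hd ⊢
  rintro (_ | j) hj
  · rwa [coeff_zero_eq_constantCoeff_apply]
  · have h := hd j (by omega)
    rw [coeff_derivative, mul_comm, ← Nat.cast_succ, ← nsmul_eq_mul, nsmul_eq_zero_iff] at h
    exact h.resolve_right j.succ_ne_zero

end PowerSeries

theorem derivative_exp_sub_one_pow_succ (k : ℕ) :
    d⁄dX ℚ ((exp ℚ - 1) ^ (k + 1)) = (k + 1 : ℚ) • ((exp ℚ - 1) ^ k * exp ℚ) := by
  rw [derivative_pow, map_sub, derivative_exp, derivative_one, sub_zero, Nat.add_sub_cancel,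
    smul_eq_C_mul, map_add, map_natCast, map_one, Nat.cast_add_one, mul_assoc]

theorem coeff_exp_sub_one_pow (m k : ℕ) :
    coeff m ((exp ℚ - 1) ^ k) = (k ! : ℚ) * stirlingSecond m k / m ! := by
  induction m generalizing k with
  | zero =>
    rw [coeff_zero_eq_constantCoeff_apply, map_pow, map_sub, constantCoeff_exp, map_one, sub_self]
    cases k <;> simp
  | succ m ih =>
    cases k with
    | zero => simp [coeff_one]
    | succ k =>
      have h := congrArg (coeff m) (derivative_exp_sub_one_pow_succ k)
      rw [show (exp ℚ - 1) ^ k * exp ℚ = (exp ℚ - 1) ^ (k + 1) + (exp ℚ - 1) ^ k by ring] at h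
      rw [coeff_derivative, coeff_smul, map_add, ih, ih, smul_eq_mul] at h
      rw [eq_div_iff (by positivity), stirlingSecond_succ_succ]
      field_simp at h
      simp only [factorial_succ] at h ⊢
      push_cast at h ⊢
      linear_combination h

noncomputable def expSubOneDivX : ℚ⟦X⟧ := mk fun m => ((m + 1)! : ℚ)⁻¹

theorem X_mul_expSubOneDivX : X * expSubOneDivX = exp ℚ - 1 := by
  ext (_ | m) <;> simp [expSubOneDivX, coeff_succ_X_mul, coeff_one]

theorem constantCoeff_expSubOneDivX : constantCoeff expSubOneDivX = 1 := by
  simp [expSubOneDivX, ← coeff_zero_eq_constantCoeff_apply]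

theorem bernoulliPowerSeries_mul_expSubOneDivX : bernoulliPowerSeries ℚ * expSubOneDivX = 1 :=
  mul_left_cancel₀ X_ne_zero <| by
    rw [mul_left_comm, X_mul_expSubOneDivX, bernoulliPowerSeries_mul_exp_sub_one, mul_one]

theorem coeff_expSubOneDivX_pow (n i : ℕ) :
    coeff n (expSubOneDivX ^ i) = (i ! : ℚ) * stirlingSecond (n + i) i / (n + i)! := by
  rw [← coeff_exp_sub_one_pow, ← X_mul_expSubOneDivX, mul_pow, coeff_X_pow_mul]

theorem bernoulli_eq_factorial_mul_coeff {G : ℚ⟦X⟧} {n : ℕ}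
    (h : X ^ (n + 1) ∣ G * expSubOneDivX - 1) : bernoulli n = n ! * coeff n G := by
  rw [coeff_eq_of_X_pow_dvd_mul_sub_one bernoulliPowerSeries_mul_expSubOneDivX h,
    bernoulliPowerSeries, coeff_mk, Algebra.algebraMap_self, RingHom.id_apply,
    mul_div_cancel₀ _ (by positivity)]

theorem bernoulli_eq_sum_factorial_mul_stirlingSecond (n : ℕ) :
    bernoulli n = ∑ k ∈ range (n + 1), (-1 : ℚ) ^ k * k ! / (k + 1) * stirlingSecond n k := by
  set E := exp ℚ - 1 with hE
  set P := ∑ k ∈ range (n + 1), ((-1 : ℚ) ^ k / (k + 1)) • E ^ k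
  have hderiv : d⁄dX ℚ (P * E) = 1 - (-E) ^ (n + 1) := by
    have hterm : ∀ k ∈ range (n + 1),
        d⁄dX ℚ (((-1 : ℚ) ^ k / (k + 1)) • E ^ k * E) = (-E) ^ k * (1 - -E) := fun k _ => by
      rw [smul_mul_assoc, ← pow_succ, Derivation.map_smul, derivative_exp_sub_one_pow_succ,
        smul_smul, div_mul_cancel₀ _ (by positivity), smul_eq_C_mul, map_pow, map_neg, map_one,
        neg_pow E, hE]
      ring
    rw [sum_mul, map_sum, sum_congr rfl hterm, ← sum_mul, geom_sum_mul_neg]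
  have hdvd : X ^ (n + 2) ∣ P * E - X := by
    refine X_pow_succ_dvd_of_X_pow_dvd_derivative ?_ ?_
    · simp [E, constantCoeff_exp]
    · rw [map_sub, hderiv, derivative_X, sub_sub_cancel_left]
      exact (pow_dvd_pow_of_dvd (X_mul_expSubOneDivX ▸ dvd_mul_right _ _).neg_right _).neg_right
  have hfactor : P * E - X = X * (P * expSubOneDivX - 1) := by
    rw [hE, ← X_mul_expSubOneDivX]; ring
  rw [hfactor, _root_.pow_succ', mul_dvd_mul_iff_left X_ne_zero] at hdvd
  rw [bernoulli_eq_factorial_mul_coeff hdvd, map_sum, mul_sum]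
  refine sum_congr rfl fun k _ => ?_
  rw [coeff_smul, coeff_exp_sub_one_pow, smul_eq_mul]
  field_simp

theorem bernoulli_eq_sum_choose_div_choose_mul_stirlingSecond (n : ℕ) :
    bernoulli n = ∑ i ∈ range (n + 1),
      (-1 : ℚ) ^ i * (n + 1).choose (i + 1) / (n + i).choose i * stirlingSecond (n + i) i := by
  set F := expSubOneDivX
  set G := ∑ i ∈ range (n + 1), ((-1 : ℚ) ^ i * (n + 1).choose (i + 1)) • F ^ i
  have hGF : G * F - 1 = -(1 - F) ^ (n + 1) := by
    have hterm : ∀ i ∈ range (n + 1), ((-1 : ℚ) ^ i * (n + 1).choose (i + 1)) • F ^ i * F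
        = (-1) ^ i * (n + 1).choose (i + 1) * F ^ (i + 1) := fun i _ => by
      rw [smul_mul_assoc, ← pow_succ, smul_eq_C_mul, map_mul, map_pow, map_neg, map_one,
        map_natCast]
    rw [sum_mul, sum_congr rfl hterm, one_sub_pow_succ]
    ring
  have hdvd : X ^ (n + 1) ∣ G * F - 1 := by
    rw [hGF]
    refine (pow_dvd_pow_of_dvd ?_ _).neg_right
    rw [X_dvd_iff, map_sub, constantCoeff_expSubOneDivX, map_one, sub_self]
  rw [bernoulli_eq_factorial_mul_coeff hdvd, map_sum, mul_sum]
  refine sum_congr rfl fun i _ => ?_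
  rw [coeff_smul, coeff_expSubOneDivX_pow, smul_eq_mul,
    ← add_choose_mul_factorial_mul_factorial n i]
  push_cast
  field_simp

/-- The two explicit Stirling-number formulas for `B_n` agree:
`∑_{k=0}^n (-1)^k k!/(k+1) S(n,k) = ∑_{i=0}^n (-1)^i C(n+1,i+1)/C(n+i,i) S(n+i,i)`. -/
theorem two_stirling2_formulas_agree (n : ℕ) :
    ∑ k ∈ Finset.range (n + 1), (-1 : ℚ) ^ k * (k.factorial : ℚ) / (k + 1) * stirling2 n k
      = ∑ i ∈ Finset.range (n + 1),
          (-1 : ℚ) ^ i * ((n + 1).choose (i + 1) : ℚ) / ((n + i).choose i : ℚ)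
            * stirling2 (n + i) i := by
  simp only [stirling2_eq_stirlingSecond]
  rw [← bernoulli_eq_sum_factorial_mul_stirlingSecond,
    ← bernoulli_eq_sum_choose_div_choose_mul_stirlingSecond]
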